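/- For each i = 1,…,n, the abelian group (i)·R_n·(i) is free of rank 2 with basis {(i), (i|i+1|i)}, and the element X_i = (i|i+1|i) satisfies X_i² = 0, so (i)R_n(i) is isomorphic as a ring to ℤ[X]/(X²). -/

import Mathlib

/-- Generators of the path algebra of the cyclic quiver on `n` vertices:
`e i` is the constant path `(i)` at vertex `i`, `a i` the arrow `(i|i+1)`,
`b i` the arrow `(i+1|i)` (indices in `Fin n`, i.e. mod `n`). -/
inductive Gen (n : ℕ) : Type
  | e : Fin n → Gen n
  | a : Fin n → Gen n
  | b : Fin n → Gen n

/-- The generator `(i)` in the free algebra. -/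
noncomputable def Ev (n : ℕ) (i : Fin n) : FreeAlgebra ℤ (Gen n) := FreeAlgebra.ι ℤ (Gen.e i)

/-- The generator `(i|i+1)` in the free algebra. -/
noncomputable def Av (n : ℕ) (i : Fin n) : FreeAlgebra ℤ (Gen n) := FreeAlgebra.ι ℤ (Gen.a i)

/-- The generator `(i+1|i)` in the free algebra. -/
noncomputable def Bv (n : ℕ) (i : Fin n) : FreeAlgebra ℤ (Gen n) := FreeAlgebra.ι ℤ (Gen.b i)

/-- The defining relations of `R_n`: the path-algebra relations (the `(i)` are
orthogonal idempotents summing to `1` and the arrows compose as paths of the cyclic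
quiver), together with the quiver-algebra relations
`(i|i+1|i) = (i|i-1|i)` and `(i-1|i|i+1) = (i+1|i|i-1) = 0` (indices mod `n`). -/
inductive QRel (n : ℕ) [NeZero n] : FreeAlgebra ℤ (Gen n) → FreeAlgebra ℤ (Gen n) → Prop
  | idem (i : Fin n) : QRel n (Ev n i * Ev n i) (Ev n i)
  | orth (i j : Fin n) (h : i ≠ j) : QRel n (Ev n i * Ev n j) 0
  | sum_eq_one : QRel n (∑ i, Ev n i) 1
  | eA (i : Fin n) : QRel n (Ev n i * Av n i) (Av n i)
  | Ae (i : Fin n) : QRel n (Av n i * Ev n (i + 1)) (Av n i)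
  | eB (i : Fin n) : QRel n (Ev n (i + 1) * Bv n i) (Bv n i)
  | Be (i : Fin n) : QRel n (Bv n i * Ev n i) (Bv n i)
  | loop (i : Fin n) : QRel n (Av n i * Bv n i) (Bv n (i - 1) * Av n (i - 1))
  | aa (i : Fin n) : QRel n (Av n (i - 1) * Av n i) 0
  | bb (i : Fin n) : QRel n (Bv n i * Bv n (i - 1)) 0

/-- The algebra `R_n`: the quotient of the path algebra of the cyclic quiver on `n`
vertices by the relations `(i|i+1|i) = (i|i-1|i)`, `(i-1|i|i+1) = (i+1|i|i-1) = 0`. -/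
abbrev Rn (n : ℕ) [NeZero n] : Type := RingQuot (QRel n)

/-- The constant path `(i)` in `R_n`. -/
noncomputable def ee (n : ℕ) [NeZero n] (i : Fin n) : Rn n :=
  RingQuot.mkRingHom (QRel n) (Ev n i)

/-- The path `(i|i+1)` in `R_n`. -/
noncomputable def aA (n : ℕ) [NeZero n] (i : Fin n) : Rn n :=
  RingQuot.mkRingHom (QRel n) (Av n i)

/-- The path `(i+1|i)` in `R_n`. -/
noncomputable def bB (n : ℕ) [NeZero n] (i : Fin n) : Rn n :=
  RingQuot.mkRingHom (QRel n) (Bv n i)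

section Table
variable {n : ℕ} [NeZero n]

local notation "mk" => RingQuot.mkRingHom (QRel n)

lemma mk_rel {x y : FreeAlgebra ℤ (Gen n)} (h : QRel n x y) :
    RingQuot.mkRingHom (QRel n) x = RingQuot.mkRingHom (QRel n) y :=
  RingQuot.mkRingHom_rel h

lemma ee_mul_ee (j k : Fin n) : ee n j * ee n k = if j = k then ee n j else 0 := by
  split_ifs with h
  · subst h; rw [ee, ← map_mul, mk_rel (QRel.idem j)]
  · rw [ee, ee, ← map_mul, mk_rel (QRel.orth j k h), map_zero]

lemma ee_mul_aA (j k : Fin n) : ee n j * aA n k = if j = k then aA n k else 0 := by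
  split_ifs with h
  · subst h; rw [ee, aA, ← map_mul, mk_rel (QRel.eA j)]
  · rw [show aA n k = ee n k * aA n k by rw [ee, aA, ← map_mul, mk_rel (QRel.eA k)],
      ← mul_assoc, ee_mul_ee, if_neg h, zero_mul]

lemma aA_mul_ee (j k : Fin n) : aA n j * ee n k = if k = j + 1 then aA n j else 0 := by
  split_ifs with h
  · subst h; rw [ee, aA, ← map_mul, mk_rel (QRel.Ae j)]
  · rw [show aA n j = aA n j * ee n (j+1) by rw [ee, aA, ← map_mul, mk_rel (QRel.Ae j)],
      mul_assoc, ee_mul_ee, if_neg (fun hh => h hh.symm), mul_zero]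

lemma ee_mul_bB (j k : Fin n) : ee n j * bB n k = if j = k + 1 then bB n k else 0 := by
  split_ifs with h
  · subst h; rw [ee, bB, ← map_mul, mk_rel (QRel.eB k)]
  · rw [show bB n k = ee n (k+1) * bB n k by rw [ee, bB, ← map_mul, mk_rel (QRel.eB k)],
      ← mul_assoc, ee_mul_ee, if_neg h, zero_mul]

lemma bB_mul_ee (j k : Fin n) : bB n j * ee n k = if k = j then bB n j else 0 := by
  split_ifs with h
  · subst h; rw [ee, bB, ← map_mul, mk_rel (QRel.Be k)]
  · rw [show bB n j = bB n j * ee n j by rw [ee, bB, ← map_mul, mk_rel (QRel.Be j)],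
      mul_assoc, ee_mul_ee, if_neg (fun hh => h hh.symm), mul_zero]

lemma aA_mul_aA (j k : Fin n) : aA n j * aA n k = 0 := by
  by_cases h : k = j + 1
  · subst h
    have : j = (j + 1) - 1 := (add_sub_cancel_right j 1).symm
    rw [aA, aA, ← map_mul]
    nth_rewrite 1 [this]
    rw [mk_rel (QRel.aa (j+1)), map_zero]
  · rw [show aA n j = aA n j * ee n (j+1) by rw [ee, aA, ← map_mul, mk_rel (QRel.Ae j)],
      mul_assoc, ee_mul_aA, if_neg (fun hh => h hh.symm), mul_zero]

lemma bB_mul_bB (j k : Fin n) : bB n j * bB n k = 0 := by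
  by_cases h : j = k + 1
  · subst h
    have : k = (k + 1) - 1 := (add_sub_cancel_right k 1).symm
    rw [bB, bB, ← map_mul]
    nth_rewrite 2 [this]
    rw [mk_rel (QRel.bb (k+1)), map_zero]
  · rw [show bB n j = bB n j * ee n j by rw [ee, bB, ← map_mul, mk_rel (QRel.Be j)],
      mul_assoc, ee_mul_bB, if_neg h, mul_zero]

lemma aA_mul_bB (j k : Fin n) (h : j ≠ k) : aA n j * bB n k = 0 := by
  rw [show bB n k = ee n (k+1) * bB n k by rw [ee, bB, ← map_mul, mk_rel (QRel.eB k)],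
    ← mul_assoc, aA_mul_ee, if_neg (fun hh : k + 1 = j + 1 => h (by
      have := add_right_cancel hh; exact this.symm)), zero_mul]

lemma bB_mul_aA (j k : Fin n) : bB n j * aA n k =
    if j = k then aA n (j+1) * bB n (j+1) else 0 := by
  split_ifs with h
  · subst h
    have h1 : j = (j + 1) - 1 := (add_sub_cancel_right j 1).symm
    rw [aA, aA, bB, bB, ← map_mul, ← map_mul]
    nth_rewrite 1 [h1]; nth_rewrite 2 [h1]
    rw [← mk_rel (QRel.loop (j+1))]
  · rw [show aA n k = ee n k * aA n k by rw [ee, aA, ← map_mul, mk_rel (QRel.eA k)],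
      ← mul_assoc, bB_mul_ee, if_neg (fun hh => h hh.symm), zero_mul]

end Table

noncomputable section Rep
open Matrix

abbrev K4 : Type := Matrix (Fin 4) (Fin 4) ℤ
def ss : K4 := Matrix.single 1 0 1 + Matrix.single 3 2 1
def tt : K4 := Matrix.single 2 0 1 + Matrix.single 3 1 1

lemma ss_mul_ss : ss * ss = 0 := by
  ext i j
  fin_cases i <;> fin_cases j <;>
    simp [ss, Matrix.mul_apply, Matrix.single, Fin.sum_univ_succ]

lemma tt_mul_tt : tt * tt = 0 := by
  ext i j
  fin_cases i <;> fin_cases j <;>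
    simp [tt, Matrix.mul_apply, Matrix.single, Fin.sum_univ_succ]

lemma ss_mul_tt : ss * tt = Matrix.single 3 0 1 := by
  ext i j
  fin_cases i <;> fin_cases j <;>
    simp [ss, tt, Matrix.mul_apply, Matrix.single, Fin.sum_univ_succ]

lemma tt_mul_ss : tt * ss = ss * tt := by
  rw [ss_mul_tt]
  ext i j
  fin_cases i <;> fin_cases j <;>
    simp [ss, tt, Matrix.mul_apply, Matrix.single, Fin.sum_univ_succ]

lemma indepK (c d : ℤ) (h : c • (1 : K4) + d • (ss * tt) = 0) : c = 0 ∧ d = 0 := by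
  rw [ss_mul_tt] at h
  constructor
  · have := congrFun (congrFun h 0) 0
    simpa [← Matrix.diagonal_intCast (α := ℤ) (n := Fin 4), Matrix.add_apply, Matrix.smul_apply,
      Matrix.diagonal_apply, Matrix.single, Matrix.one_apply] using this
  · have := congrFun (congrFun h 3) 0
    simpa [← Matrix.diagonal_intCast (α := ℤ) (n := Fin 4), Matrix.add_apply, Matrix.smul_apply,
      Matrix.diagonal_apply, Matrix.single, Matrix.one_apply] using this

variable (n : ℕ) [NeZero n]

def repGen : Gen n → Matrix (Fin n) (Fin n) K4
  | .e j => Matrix.single j j 1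
  | .a j => Matrix.single j (j+1) ss
  | .b j => Matrix.single (j+1) j tt

def repA : FreeAlgebra ℤ (Gen n) →ₐ[ℤ] Matrix (Fin n) (Fin n) K4 :=
  FreeAlgebra.lift ℤ (repGen n)

lemma repA_Ev (j : Fin n) : repA n (Ev n j) = Matrix.single j j 1 :=
  FreeAlgebra.lift_ι_apply _ _
lemma repA_Av (j : Fin n) : repA n (Av n j) = Matrix.single j (j+1) ss :=
  FreeAlgebra.lift_ι_apply _ _
lemma repA_Bv (j : Fin n) : repA n (Bv n j) = Matrix.single (j+1) j tt :=
  FreeAlgebra.lift_ι_apply _ _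

omit [NeZero n] in
lemma sum_E : ∑ j, Matrix.single j j (1 : K4) = (1 : Matrix (Fin n) (Fin n) K4) := by
  ext p q
  rw [Matrix.sum_apply]
  simp [Matrix.single, Matrix.one_apply, ite_and]

lemma repRel : ∀ ⦃x y : FreeAlgebra ℤ (Gen n)⦄, QRel n x y → repA n x = repA n y := by
  intro x y h
  induction h with
  | idem j => rw [_root_.map_mul, repA_Ev, Matrix.single_mul_single_same, one_mul]
  | orth j k h => rw [_root_.map_mul, repA_Ev, repA_Ev, Matrix.single_mul_single_of_ne (h := h), _root_.map_zero]
  | sum_eq_one => rw [_root_.map_sum, _root_.map_one]; simp only [repA_Ev]; exact sum_E n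
  | eA j => rw [_root_.map_mul, repA_Ev, repA_Av, Matrix.single_mul_single_same, one_mul]
  | Ae j => rw [_root_.map_mul, repA_Ev, repA_Av, Matrix.single_mul_single_same, mul_one]
  | eB j => rw [_root_.map_mul, repA_Ev, repA_Bv, Matrix.single_mul_single_same, one_mul]
  | Be j => rw [_root_.map_mul, repA_Ev, repA_Bv, Matrix.single_mul_single_same, mul_one]
  | loop j =>
      rw [_root_.map_mul, _root_.map_mul, repA_Av, repA_Bv, repA_Av, repA_Bv, sub_add_cancel,
        Matrix.single_mul_single_same, Matrix.single_mul_single_same, tt_mul_ss]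
  | aa j =>
      rw [_root_.map_mul, _root_.map_zero, repA_Av, repA_Av, sub_add_cancel, Matrix.single_mul_single_same,
        ss_mul_ss, Matrix.single_zero]
  | bb j =>
      rw [_root_.map_mul, _root_.map_zero, repA_Bv, repA_Bv, sub_add_cancel, Matrix.single_mul_single_same,
        tt_mul_tt, Matrix.single_zero]

def rr : Rn n →+* Matrix (Fin n) (Fin n) K4 :=
  RingQuot.lift ⟨(repA n).toRingHom, repRel n⟩

lemma rr_ee (j : Fin n) : rr n (ee n j) = Matrix.single j j 1 := by
  rw [ee, rr, RingQuot.lift_mkRingHom_apply]; exact repA_Ev n j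
lemma rr_aA (j : Fin n) : rr n (aA n j) = Matrix.single j (j+1) ss := by
  rw [aA, rr, RingQuot.lift_mkRingHom_apply]; exact repA_Av n j
lemma rr_bB (j : Fin n) : rr n (bB n j) = Matrix.single (j+1) j tt := by
  rw [bB, rr, RingQuot.lift_mkRingHom_apply]; exact repA_Bv n j

lemma indepRn (i : Fin n) (c d : ℤ)
    (h : c • ee n i + d • (aA n i * bB n i) = 0) : c = 0 ∧ d = 0 := by
  have h0 := congrArg (rr n) h
  rw [_root_.map_add, _root_.map_zsmul, _root_.map_zsmul, _root_.map_mul, _root_.map_zero, rr_ee, rr_aA, rr_bB,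
    Matrix.single_mul_single_same] at h0
  have h1 := congrFun (congrFun h0 i) i
  simp only [Matrix.add_apply, Matrix.smul_apply, Matrix.single_apply_same,
    Matrix.zero_apply] at h1
  exact indepK c d h1

end Rep

section Span
variable {n : ℕ} [NeZero n]

lemma ee_mul_xX (j k : Fin n) :
    ee n j * (aA n k * bB n k) = if j = k then aA n k * bB n k else 0 := by
  rw [← mul_assoc, ee_mul_aA]
  split_ifs <;> simp

lemma xX_mul_ee (j k : Fin n) :
    (aA n j * bB n j) * ee n k = if k = j then aA n j * bB n j else 0 := by
  rw [mul_assoc, bB_mul_ee]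
  split_ifs <;> simp

lemma aA_mul_xX (j k : Fin n) : aA n j * (aA n k * bB n k) = 0 := by
  rw [← mul_assoc, aA_mul_aA, zero_mul]

lemma xX_mul_aA (j k : Fin n) : (aA n j * bB n j) * aA n k = 0 := by
  rw [mul_assoc, bB_mul_aA]
  split_ifs with h
  · rw [aA_mul_xX]
  · rw [mul_zero]

lemma bB_mul_xX (j k : Fin n) : bB n j * (aA n k * bB n k) = 0 := by
  rw [← mul_assoc, bB_mul_aA]
  split_ifs with h
  · rw [mul_assoc, bB_mul_bB, mul_zero]
  · rw [zero_mul]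

lemma xX_mul_bB (j k : Fin n) : (aA n j * bB n j) * bB n k = 0 := by
  rw [mul_assoc, bB_mul_bB, mul_zero]

lemma xX_mul_xX (j k : Fin n) :
    (aA n j * bB n j) * (aA n k * bB n k) = 0 := by
  rw [← mul_assoc, xX_mul_aA, zero_mul]

/-- The spanning set of `R_n`: all (images of) paths. -/
def SpanSet (n : ℕ) [NeZero n] : Set (Rn n) :=
  Set.range (ee n) ∪ Set.range (aA n) ∪ Set.range (bB n) ∪
    Set.range (fun j => aA n j * bB n j)

lemma one_eq_sum : (1 : Rn n) = ∑ j, ee n j := by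
  have h1 : (1 : Rn n) = RingQuot.mkRingHom (QRel n) 1 := (map_one _).symm
  rw [h1, ← mk_rel QRel.sum_eq_one, map_sum]
  rfl

lemma genMul_mem (g₁ g₂ : Rn n) (h₁ : g₁ ∈ SpanSet n) (h₂ : g₂ ∈ SpanSet n) :
    g₁ * g₂ ∈ Submodule.span ℤ (SpanSet n) := by
  have he : ∀ j : Fin n, ee n j ∈ SpanSet n := fun j => Or.inl (Or.inl (Or.inl ⟨j, rfl⟩))
  have ha : ∀ j : Fin n, aA n j ∈ SpanSet n := fun j => Or.inl (Or.inl (Or.inr ⟨j, rfl⟩))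
  have hb : ∀ j : Fin n, bB n j ∈ SpanSet n := fun j => Or.inl (Or.inr ⟨j, rfl⟩)
  have hx : ∀ j : Fin n, aA n j * bB n j ∈ SpanSet n := fun j => Or.inr ⟨j, rfl⟩
  rcases h₁ with ((⟨j, rfl⟩ | ⟨j, rfl⟩) | ⟨j, rfl⟩) | ⟨j, rfl⟩ <;>
    rcases h₂ with ((⟨k, rfl⟩ | ⟨k, rfl⟩) | ⟨k, rfl⟩) | ⟨k, rfl⟩
  · rw [ee_mul_ee]; split_ifs
    · exact Submodule.subset_span (he j)
    · exact Submodule.zero_mem _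
  · rw [ee_mul_aA]; split_ifs
    · exact Submodule.subset_span (ha k)
    · exact Submodule.zero_mem _
  · rw [ee_mul_bB]; split_ifs
    · exact Submodule.subset_span (hb k)
    · exact Submodule.zero_mem _
  · rw [ee_mul_xX]; split_ifs
    · exact Submodule.subset_span (hx k)
    · exact Submodule.zero_mem _
  · rw [aA_mul_ee]; split_ifs
    · exact Submodule.subset_span (ha j)
    · exact Submodule.zero_mem _
  · rw [aA_mul_aA]; exact Submodule.zero_mem _
  · by_cases h : j = k
    · subst h; exact Submodule.subset_span (hx j)
    · rw [aA_mul_bB j k h]; exact Submodule.zero_mem _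
  · rw [aA_mul_xX]; exact Submodule.zero_mem _
  · rw [bB_mul_ee]; split_ifs
    · exact Submodule.subset_span (hb j)
    · exact Submodule.zero_mem _
  · rw [bB_mul_aA]; split_ifs
    · exact Submodule.subset_span (hx (j+1))
    · exact Submodule.zero_mem _
  · rw [bB_mul_bB]; exact Submodule.zero_mem _
  · rw [bB_mul_xX]; exact Submodule.zero_mem _
  · rw [xX_mul_ee]; split_ifs
    · exact Submodule.subset_span (hx j)
    · exact Submodule.zero_mem _
  · rw [xX_mul_aA]; exact Submodule.zero_mem _
  · rw [xX_mul_bB]; exact Submodule.zero_mem _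
  · rw [xX_mul_xX]; exact Submodule.zero_mem _

lemma mul_mem_span {u v : Rn n} (hu : u ∈ Submodule.span ℤ (SpanSet n))
    (hv : v ∈ Submodule.span ℤ (SpanSet n)) :
    u * v ∈ Submodule.span ℤ (SpanSet n) := by
  induction hu using Submodule.span_induction with
  | mem g hg =>
    induction hv using Submodule.span_induction with
    | mem g' hg' => exact genMul_mem g g' hg hg'
    | zero => rw [mul_zero]; exact Submodule.zero_mem _
    | add x y hx hy ihx ihy => rw [mul_add]; exact Submodule.add_mem _ ihx ihy
    | smul a x hx ihx => rw [mul_smul_comm]; exact Submodule.smul_mem _ _ ihx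
  | zero => rw [zero_mul]; exact Submodule.zero_mem _
  | add x y hx hy ihx ihy => rw [add_mul]; exact Submodule.add_mem _ ihx ihy
  | smul a x hx ihx => rw [smul_mul_assoc]; exact Submodule.smul_mem _ _ ihx

lemma all_mem_span (r : Rn n) : r ∈ Submodule.span ℤ (SpanSet n) := by
  obtain ⟨x, rfl⟩ := RingQuot.mkRingHom_surjective (QRel n) r
  induction x using FreeAlgebra.induction with
  | grade0 c =>
    have : (RingQuot.mkRingHom (QRel n)) (algebraMap ℤ _ c) = c • (1 : Rn n) := by
      rw [eq_intCast (algebraMap ℤ (FreeAlgebra ℤ (Gen n))) c, map_intCast, zsmul_one]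
    rw [this, one_eq_sum]
    exact Submodule.smul_mem _ _ (Submodule.sum_mem _ fun j _ =>
      Submodule.subset_span (Or.inl (Or.inl (Or.inl ⟨j, rfl⟩))))
  | grade1 g =>
    cases g with
    | e j => exact Submodule.subset_span (Or.inl (Or.inl (Or.inl ⟨j, rfl⟩)))
    | a j => exact Submodule.subset_span (Or.inl (Or.inl (Or.inr ⟨j, rfl⟩)))
    | b j => exact Submodule.subset_span (Or.inl (Or.inr ⟨j, rfl⟩))
  | mul x y ihx ihy => rw [map_mul]; exact mul_mem_span ihx ihy
  | add x y ihx ihy => rw [map_add]; exact Submodule.add_mem _ ihx ihy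

end Span

section Corner
variable {n : ℕ} [NeZero n]

lemma one_ne_zero_fin (hn : 3 ≤ n) : (1 : Fin n) ≠ 0 := by
  intro h
  have h2 : (1 : Fin n).val = (0 : Fin n).val := congrArg Fin.val h
  rw [Fin.val_one', Fin.val_zero, Nat.mod_eq_of_lt (by omega)] at h2
  omega

lemma finSuccNe (hn : 3 ≤ n) (j : Fin n) : j + 1 ≠ j := by
  intro h
  have h' : j + 1 = j + 0 := by rw [add_zero]; exact h
  exact one_ne_zero_fin hn (add_left_cancel h')

lemma corner_mem (hn : 3 ≤ n) (i : Fin n) (r : Rn n) :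
    ee n i * r * ee n i ∈
      Submodule.span ℤ ({ee n i, aA n i * bB n i} : Set (Rn n)) := by
  have hr := all_mem_span r
  induction hr using Submodule.span_induction with
  | mem g hg =>
    rcases hg with ((⟨j, rfl⟩ | ⟨j, rfl⟩) | ⟨j, rfl⟩) | ⟨j, rfl⟩
    · rw [ee_mul_ee]
      split_ifs with h
      · rw [ee_mul_ee, if_pos rfl]
        exact Submodule.subset_span (Set.mem_insert _ _)
      · rw [zero_mul]; exact Submodule.zero_mem _
    · rw [ee_mul_aA]
      split_ifs with h
      · subst h
        rw [aA_mul_ee, if_neg (fun hh => finSuccNe hn i hh.symm)]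
        exact Submodule.zero_mem _
      · rw [zero_mul]; exact Submodule.zero_mem _
    · rw [ee_mul_bB]
      split_ifs with h
      · subst h
        rw [bB_mul_ee, if_neg (finSuccNe hn j)]
        exact Submodule.zero_mem _
      · rw [zero_mul]; exact Submodule.zero_mem _
    · rw [ee_mul_xX]
      split_ifs with h
      · subst h
        rw [xX_mul_ee, if_pos rfl]
        exact Submodule.subset_span (Set.mem_insert_of_mem _ rfl)
      · rw [zero_mul]; exact Submodule.zero_mem _
  | zero => rw [mul_zero, zero_mul]; exact Submodule.zero_mem _
  | add x y hx hy ihx ihy => rw [mul_add, add_mul]; exact Submodule.add_mem _ ihx ihy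
  | smul a x hx ihx => rw [mul_smul_comm, smul_mul_assoc]; exact Submodule.smul_mem _ _ ihx

lemma indep' (i : Fin n) {c d c' d' : ℤ}
    (h : c • ee n i + d • (aA n i * bB n i) = c' • ee n i + d' • (aA n i * bB n i)) :
    c = c' ∧ d = d' := by
  have h0 : (c - c') • ee n i + (d - d') • (aA n i * bB n i) = 0 := by
    rw [sub_smul, sub_smul]
    rw [← sub_eq_zero] at h
    rw [← h]; abel
  obtain ⟨h1, h2⟩ := indepRn n i _ _ h0
  constructor <;> omega

/-- The corner embedding of the dual numbers. -/
noncomputable def hmap (i : Fin n) : DualNumber ℤ →ₙ+* Rn n where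
  toFun z := z.fst • ee n i + z.snd • (aA n i * bB n i)
  map_zero' := by
    rw [TrivSqZeroExt.fst_zero, TrivSqZeroExt.snd_zero, zero_zsmul, zero_zsmul, add_zero]
  map_add' z w := by
    rw [TrivSqZeroExt.fst_add, TrivSqZeroExt.snd_add, add_zsmul, add_zsmul]
    abel
  map_mul' z w := by
    rw [TrivSqZeroExt.fst_mul, TrivSqZeroExt.snd_mul]
    rw [mul_add, add_mul, add_mul, smul_mul_smul_comm, smul_mul_smul_comm,
      smul_mul_smul_comm, smul_mul_smul_comm, ee_mul_ee, if_pos rfl,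
      ee_mul_xX, if_pos rfl, xX_mul_ee, if_pos rfl, xX_mul_xX, zsmul_zero, add_zero,
      smul_eq_mul, MulOpposite.smul_eq_mul_unop, MulOpposite.unop_op, add_zsmul]
    abel

lemma hmap_apply (i : Fin n) (z : DualNumber ℤ) :
    hmap i z = z.fst • ee n i + z.snd • (aA n i * bB n i) := rfl

lemma hmap_inj (i : Fin n) : Function.Injective (hmap (n := n) i) := by
  intro z w h
  rw [hmap_apply, hmap_apply] at h
  obtain ⟨h1, h2⟩ := indep' i h
  exact TrivSqZeroExt.ext h1 h2

end Corner

section Qq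

open Polynomial

lemma aeval_eps_decomp (p : Polynomial ℤ) :
    Polynomial.aeval (DualNumber.eps : DualNumber ℤ) p =
      TrivSqZeroExt.inl (p.coeff 0) + p.coeff 1 • DualNumber.eps := by
  have hdecomp : p = p.divX.divX * Polynomial.X ^ 2 +
      (Polynomial.C (p.coeff 1) * Polynomial.X + Polynomial.C (p.coeff 0)) := by
    conv_lhs => rw [← Polynomial.divX_mul_X_add p]
    conv_lhs => rw [← Polynomial.divX_mul_X_add p.divX]
    rw [show (Polynomial.divX p).coeff 0 = p.coeff 1 from Polynomial.coeff_divX]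
    ring
  conv_lhs => rw [hdecomp]
  rw [map_add, map_add, map_mul, map_mul, map_pow, Polynomial.aeval_X, pow_two,
    DualNumber.eps_mul_eps, mul_zero, zero_add]
  rw [Polynomial.aeval_C, Polynomial.aeval_C, TrivSqZeroExt.algebraMap_eq_inl,
    DualNumber.eps, TrivSqZeroExt.inl_mul_inr, smul_eq_mul, mul_one, add_comm]
  congr 1
  apply TrivSqZeroExt.ext
  · rw [TrivSqZeroExt.fst_smul, TrivSqZeroExt.fst_inr, TrivSqZeroExt.fst_inr, smul_zero]
  · rw [TrivSqZeroExt.snd_smul, TrivSqZeroExt.snd_inr, TrivSqZeroExt.snd_inr,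
      smul_eq_mul, mul_one]

lemma sq_dvd_of_aeval_eps {p : Polynomial ℤ}
    (h : Polynomial.aeval (DualNumber.eps : DualNumber ℤ) p = 0) :
    (Polynomial.X : Polynomial ℤ) ^ 2 ∣ p := by
  rw [aeval_eps_decomp] at h
  have h1 := congrArg TrivSqZeroExt.fst h
  have h2 := congrArg TrivSqZeroExt.snd h
  rw [TrivSqZeroExt.fst_add, TrivSqZeroExt.fst_inl, TrivSqZeroExt.fst_smul, DualNumber.eps,
    TrivSqZeroExt.fst_inr, smul_zero, add_zero, TrivSqZeroExt.fst_zero] at h1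
  rw [TrivSqZeroExt.snd_add, TrivSqZeroExt.snd_inl, TrivSqZeroExt.snd_smul, DualNumber.eps,
    TrivSqZeroExt.snd_inr, zero_add, smul_eq_mul, mul_one, TrivSqZeroExt.snd_zero] at h2
  have hdecomp : p = p.divX.divX * Polynomial.X ^ 2 +
      (Polynomial.C (p.coeff 1) * Polynomial.X + Polynomial.C (p.coeff 0)) := by
    conv_lhs => rw [← Polynomial.divX_mul_X_add p]
    conv_lhs => rw [← Polynomial.divX_mul_X_add p.divX]
    rw [show (Polynomial.divX p).coeff 0 = p.coeff 1 from Polynomial.coeff_divX]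
    ring
  rw [hdecomp, h1, h2]
  simp [dvd_mul_left]

/-- The quotient map to dual numbers. -/
noncomputable def qq :
    (Polynomial ℤ ⧸ Ideal.span {(Polynomial.X : Polynomial ℤ) ^ 2}) →+* DualNumber ℤ :=
  Ideal.Quotient.lift _ (Polynomial.aeval (DualNumber.eps : DualNumber ℤ)).toRingHom (by
    intro p hp
    rw [Ideal.mem_span_singleton] at hp
    obtain ⟨c, rfl⟩ := hp
    simp [pow_two, DualNumber.eps_mul_eps])

lemma qq_mk (p : Polynomial ℤ) :
    qq (Ideal.Quotient.mk _ p) = Polynomial.aeval (DualNumber.eps : DualNumber ℤ) p := by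
  rw [qq, Ideal.Quotient.lift_mk]
  rfl

lemma qq_inj : Function.Injective qq := by
  intro u v h
  obtain ⟨p, rfl⟩ := Ideal.Quotient.mk_surjective u
  obtain ⟨p', rfl⟩ := Ideal.Quotient.mk_surjective v
  rw [qq_mk, qq_mk] at h
  rw [Ideal.Quotient.eq, Ideal.mem_span_singleton]
  apply sq_dvd_of_aeval_eps
  rw [map_sub, h, sub_self]

lemma qq_surj : Function.Surjective qq := by
  intro z
  refine ⟨Ideal.Quotient.mk _ (Polynomial.C z.fst + Polynomial.C z.snd * Polynomial.X), ?_⟩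
  rw [qq_mk, aeval_eps_decomp]
  apply TrivSqZeroExt.ext
  · rw [TrivSqZeroExt.fst_add, TrivSqZeroExt.fst_inl, TrivSqZeroExt.fst_smul, DualNumber.eps,
      TrivSqZeroExt.fst_inr, smul_zero, add_zero, Polynomial.coeff_add,
      Polynomial.coeff_C_mul, Polynomial.coeff_C, Polynomial.coeff_X_zero, mul_zero, add_zero]
    rfl
  · rw [TrivSqZeroExt.snd_add, TrivSqZeroExt.snd_inl, TrivSqZeroExt.snd_smul, DualNumber.eps,
      TrivSqZeroExt.snd_inr, zero_add, smul_eq_mul, mul_one, Polynomial.coeff_add,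
      Polynomial.coeff_C_mul, Polynomial.coeff_C, Polynomial.coeff_X_one, mul_one]
    norm_num

end Qq

/-- for each vertex `i`, the corner `(i)·R_n·(i)` is free of rank `2`
as an abelian group with basis `{(i), X_i}` where `X_i = (i|i+1|i)` satisfies
`X_i² = 0`; hence `(i)·R_n·(i)` is isomorphic as a (non-unital) ring to `ℤ[X]/(X²)`. -/
theorem stmt13 (n : ℕ) [NeZero n] (hn : 3 ≤ n) (i : Fin n) :
    (aA n i * bB n i) * (aA n i * bB n i) = 0 ∧
    (∀ r : Rn n, ∃! c : ℤ × ℤ,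
      ee n i * r * ee n i = c.1 • ee n i + c.2 • (aA n i * bB n i)) ∧
    (∃ f : (Polynomial ℤ ⧸ Ideal.span {(Polynomial.X : Polynomial ℤ) ^ 2}) →ₙ+* Rn n,
      Function.Injective f ∧
      Set.range f = {x : Rn n | ee n i * x * ee n i = x}) := by
  refine ⟨xX_mul_xX i i, ?_, ?_⟩
  · intro r
    have hm := corner_mem hn i r
    rw [Submodule.mem_span_pair] at hm
    obtain ⟨c, d, hcd⟩ := hm
    refine ⟨(c, d), hcd.symm, ?_⟩
    rintro ⟨c', d'⟩ h'
    obtain ⟨h1, h2⟩ := indep' i (h'.symm.trans hcd.symm)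
    exact Prod.ext h1 h2
  · refine ⟨(hmap i).comp qq.toNonUnitalRingHom, ?_, ?_⟩
    · have hco : ⇑((hmap i).comp qq.toNonUnitalRingHom) = ⇑(hmap i) ∘ ⇑qq := rfl
      rw [hco]
      exact Function.Injective.comp (hmap_inj i) qq_inj
    · ext x
      constructor
      · rintro ⟨u, rfl⟩
        show ee n i * (hmap i (qq u)) * ee n i = hmap i (qq u)
        rw [hmap_apply, mul_add, add_mul, mul_smul_comm, smul_mul_assoc, mul_smul_comm,
          smul_mul_assoc, ee_mul_ee, if_pos rfl, ee_mul_xX, if_pos rfl, xX_mul_ee, if_pos rfl,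
          ee_mul_ee, if_pos rfl]
      · intro hx
        have hx' : ee n i * x * ee n i = x := hx
        have hm := corner_mem hn i x
        rw [Submodule.mem_span_pair, hx'] at hm
        obtain ⟨c, d, hcd⟩ := hm
        obtain ⟨u, hu⟩ := qq_surj (TrivSqZeroExt.inl c + TrivSqZeroExt.inr d)
        refine ⟨u, ?_⟩
        show hmap i (qq u) = x
        rw [hu, hmap_apply, TrivSqZeroExt.fst_add, TrivSqZeroExt.fst_inl,
          TrivSqZeroExt.fst_inr, add_zero, TrivSqZeroExt.snd_add, TrivSqZeroExt.snd_inl,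
          TrivSqZeroExt.snd_inr, zero_add]
        exact hcd
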